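/- arXiv:2511.01153 — 3 statements merged into one kernel-verified Lean document; each statement's English description precedes it below -/
import Mathlib

section
/- Let λ, μ > 0, m ≥ 2 and σ² ≥ 0 be real numbers with ρ := λ(m−1) − μ < 0, and set π↑ := 1 − λ(σ² + m(m−1))/ρ, λ↑ := (λ(π↑ − 1) + λm)/π↑ and μ↑ := μ(π↑ − 1)/π↑. Then λ↑ ≥ λ and μ↑ ≤ μ. -/
/-- In the subcritical case, the conditional limits of the classical MLEs satisfy
`λ↑ ≥ λ` and `μ↑ ≤ μ`. -/
theorem stmt2 (lam mu m s2 : ℝ) (hlam : 0 < lam) (hmu : 0 < mu)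
    (hm : 2 ≤ m) (hs2 : 0 ≤ s2) (hrho : lam * (m - 1) - mu < 0) :
    let rho := lam * (m - 1) - mu
    let piUp := 1 - lam * (s2 + m * (m - 1)) / rho
    lam ≤ (lam * (piUp - 1) + lam * m) / piUp ∧
      mu * (piUp - 1) / piUp ≤ mu := by
  intro rho piUp
  have hrho' : rho < 0 := hrho
  have h1 : 0 < m * (m - 1) := by nlinarith
  have hnum : 0 < lam * (s2 + m * (m - 1)) := by positivity
  have hdiv : lam * (s2 + m * (m - 1)) / rho < 0 := div_neg_of_pos_of_neg hnum hrho'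
  have hpi : 1 < piUp := by simp only [piUp]; linarith
  have hpi0 : 0 < piUp := by linarith
  constructor
  · rw [le_div_iff₀ hpi0]
    nlinarith
  · rw [div_le_iff₀ hpi0]
    nlinarith
end

section
/- Let λ, μ > 0 be real numbers with λ < μ. With m = 2 and σ² = 0, set ρ := λ − μ, π↑ := 1 − 2λ/ρ, λ↑ := (λ(π↑ − 1) + 2λ)/π↑ and μ↑ := μ(π↑ − 1)/π↑. Then (λ↑ − λ)/λ = (μ − μ↑)/μ = ((μ/λ) − 1)/((μ/λ) + 1). -/
/-- In the binary case, the relative asymptotic errors of the classical MLEs satisfy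
`(λ↑ - λ)/λ = (μ - μ↑)/μ = ((μ/λ) - 1)/((μ/λ) + 1)`. -/
theorem stmt10 (lam mu : ℝ) (hlam : 0 < lam) (hmu : 0 < mu) (hsub : lam < mu) :
    let rho := lam - mu
    let piUp := 1 - 2 * lam / rho
    let lamUp := (lam * (piUp - 1) + 2 * lam) / piUp
    let muUp := mu * (piUp - 1) / piUp
    (lamUp - lam) / lam = (mu / lam - 1) / (mu / lam + 1) ∧
      (mu - muUp) / mu = (mu / lam - 1) / (mu / lam + 1) := by
  intro rho piUp lamUp muUp
  have hrho : lam - mu ≠ 0 := by linarith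
  have hsum : lam + mu ≠ 0 := by positivity
  have hml : mu - lam ≠ 0 := by linarith
  have hpieq : piUp = (lam + mu) / (mu - lam) := by
    simp only [piUp, rho]
    have h1 : (1:ℝ) - 2 * lam / (lam - mu) = ((lam - mu) - 2 * lam) / (lam - mu) := by
      rw [sub_div, div_self hrho]
    rw [h1, div_eq_div_iff hrho hml]
    ring
  have hl : lam ≠ 0 := ne_of_gt hlam
  have hm : mu ≠ 0 := ne_of_gt hmu
  constructor <;>
  · simp only [lamUp, muUp, hpieq]
    field_simp
    ring
end

section
/- Let α > 2, let λ, μ > 0, and let (p_k)_{k≥2} be a nonnegative sequence with ∑_{k≥2} p_k = 1, ∑_{k≥2} k·p_k = m, ∑_{k≥2} k^α·p_k < ∞, and λ(m−1) < μ. Define V(x) := (x+1)^α and, for integers x ≥ 1, L V(x) := μ·x·(x^α − (x+1)^α) + λ·x·∑_{k≥2} p_k·((x+k)^α − (x+1)^α). Then there exist constants c > 0 and K < ∞ such that L V(x) ≤ −c·V(x) + K for all integers x ≥ 1. -/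
/-!
For `x ≥ 1`, Bernoulli's inequality bounds the death term by `x^α - (x+1)^α ≤ -α x^(α-1)`
and, applied twice, the effect of a birth of size `k` by
`(x+k)^α - (x+1)^α ≤ α (k-1) x^(α-1) + O(x^(α-2) k^α)`.
Averaging over `p` and multiplying by the rates, the leading terms add up to
`-α (μ - λ(m-1)) x^α`, which is negative by subcriticality, while the remainder is
`O(x^(α-1))` because `∑ k^α p_k < ∞`; outside a bounded set of `x` that remainder is
absorbed by half of the leading term, and `(x+1)^α ≤ 2^α x^α`.
-/

open Real

lemma rpow_tangent_line_le {a b β : ℝ} (hβ : 1 ≤ β) (ha : 0 < a) (hb : 0 ≤ b) :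
    a ^ β + β * a ^ (β - 1) * (b - a) ≤ b ^ β := by
  have h := one_add_mul_self_le_rpow_one_add (s := b / a - 1)
    (by linarith [div_nonneg hb ha.le]) hβ
  rw [add_sub_cancel, div_rpow hb ha.le, le_div_iff₀ (rpow_pos_of_pos ha β)] at h
  calc a ^ β + β * a ^ (β - 1) * (b - a) = (1 + β * (b / a - 1)) * a ^ β := by
        rw [rpow_sub_one ha.ne']; field_simp
    _ ≤ b ^ β := h

lemma rpow_sub_rpow_le_mul_rpow_sub_one {a b β : ℝ} (hβ : 1 ≤ β) (ha : 0 ≤ a)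
    (hb : 0 < b) :
    b ^ β - a ^ β ≤ β * b ^ (β - 1) * (b - a) := by
  linarith [rpow_tangent_line_le hβ hb ha]

lemma rpow_add_sub_rpow_add_one_le {α X K : ℝ} (hα : 2 ≤ α) (hX : 1 ≤ X) (hK : 1 ≤ K) :
    (X + K) ^ α - (X + 1) ^ α ≤
      α * X ^ (α - 1) * (K - 1) + α * (α - 1) * 2 ^ (α - 2) * X ^ (α - 2) * K ^ α := by
  have hX0 : 0 < X := by linarith
  have hK0 : 0 < K := by linarith
  have first_order : (X + K) ^ α - (X + 1) ^ α ≤ α * (X + K) ^ (α - 1) * (K - 1) := by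
    simpa using rpow_sub_rpow_le_mul_rpow_sub_one (by linarith) (by linarith : 0 ≤ X + 1)
      (by linarith : 0 < X + K)
  have second_order : (X + K) ^ (α - 1) - X ^ (α - 1) ≤ (α - 1) * (X + K) ^ (α - 2) * K := by
    simpa [show α - 1 - 1 = α - 2 by ring] using rpow_sub_rpow_le_mul_rpow_sub_one (β := α - 1)
      (by linarith) hX0.le (by linarith : 0 < X + K)
  have hXK : (X + K) ^ (α - 2) ≤ 2 ^ (α - 2) * X ^ (α - 2) * K ^ (α - 2) := by
    rw [← mul_rpow zero_le_two hX0.le, ← mul_rpow (by positivity) hK0.le]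
    exact rpow_le_rpow (by positivity) (by nlinarith : X + K ≤ 2 * X * K) (by linarith)
  set B := 2 ^ (α - 2) * X ^ (α - 2) * K ^ (α - 2)
  have hB : 0 ≤ B := by positivity
  have hKα : K ^ (α - 2) * K * K = K ^ α := by
    rw [mul_assoc, ← sq, ← rpow_natCast, ← rpow_add hK0]; norm_num
  calc (X + K) ^ α - (X + 1) ^ α ≤ α * (X + K) ^ (α - 1) * (K - 1) := first_order
    _ ≤ α * (X ^ (α - 1) + (α - 1) * B * K) * (K - 1) := by
        gcongr
        linarith [mul_le_mul_of_nonneg_left hXK (by nlinarith : 0 ≤ (α - 1) * K)]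
    _ ≤ α * X ^ (α - 1) * (K - 1) + α * (α - 1) * B * K * K := by
        nlinarith [mul_nonneg (mul_nonneg (mul_nonneg (by linarith : 0 ≤ α)
          (by linarith : 0 ≤ α - 1)) hB) hK0.le]
    _ = _ := by rw [← hKα]; ring

lemma tsum_mul_rpow_add_sub_le {α X m : ℝ} {p : ℕ → ℝ} (hα : 2 ≤ α) (hX : 1 ≤ X)
    (hp : ∀ k, 0 ≤ p k) (hp0 : p 0 = 0) (hsum : Summable p) (h1 : ∑' k, p k = 1)
    (hsumk : Summable fun k : ℕ => (k : ℝ) * p k) (hm : ∑' k : ℕ, (k : ℝ) * p k = m)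
    (hsumka : Summable fun k : ℕ => (k : ℝ) ^ α * p k) :
    ∑' k : ℕ, p k * ((X + k) ^ α - (X + 1) ^ α) ≤
      α * X ^ (α - 1) * (m - 1)
        + α * (α - 1) * 2 ^ (α - 2) * X ^ (α - 2) * ∑' k : ℕ, (k : ℝ) ^ α * p k := by
  set C := α * (α - 1) * 2 ^ (α - 2) * X ^ (α - 2)
  have hbound : ∀ k : ℕ, p k * ((X + k) ^ α - (X + 1) ^ α) ≤
      α * X ^ (α - 1) * (k * p k - p k) + C * (k ^ α * p k) := by
    intro k
    rcases k.eq_zero_or_pos with rfl | hk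
    · simp [hp0]
    · have hk1 : (1 : ℝ) ≤ k := by exact_mod_cast hk
      linarith [mul_le_mul_of_nonneg_left (rpow_add_sub_rpow_add_one_le hα hX hk1) (hp k)]
  have hnonneg : ∀ k : ℕ, 0 ≤ p k * ((X + k) ^ α - (X + 1) ^ α) := by
    intro k
    rcases k.eq_zero_or_pos with rfl | hk
    · simp [hp0]
    · have hk1 : (1 : ℝ) ≤ k := by exact_mod_cast hk
      exact mul_nonneg (hp k)
        (sub_nonneg.2 (rpow_le_rpow (by linarith) (by linarith) (by linarith)))
  have hmaj : Summable fun k : ℕ => α * X ^ (α - 1) * (k * p k - p k) + C * (k ^ α * p k) :=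
    ((hsumk.sub hsum).mul_left _).add (hsumka.mul_left _)
  calc ∑' k : ℕ, p k * ((X + k) ^ α - (X + 1) ^ α)
      ≤ ∑' k : ℕ, (α * X ^ (α - 1) * (k * p k - p k) + C * (k ^ α * p k)) :=
        (hmaj.of_nonneg_of_le hnonneg hbound).tsum_le_tsum hbound hmaj
    _ = _ := by
        rw [((hsumk.sub hsum).mul_left _).tsum_add (hsumka.mul_left _), tsum_mul_left,
          tsum_mul_left, hsumk.tsum_sub hsum, hm, h1]

/-- The paper's `L V(X)` for `V(x) = (x + 1)^α`. -/
noncomputable def birthDeathDrift (α lam mu : ℝ) (p : ℕ → ℝ) (X : ℝ) : ℝ :=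
  mu * X * (X ^ α - (X + 1) ^ α) + lam * X * ∑' k : ℕ, p k * ((X + k) ^ α - (X + 1) ^ α)

lemma birthDeathDrift_le {α lam mu m X : ℝ} {p : ℕ → ℝ} (hα : 2 ≤ α) (hlam : 0 ≤ lam)
    (hmu : 0 ≤ mu) (hX : 1 ≤ X) (hp : ∀ k, 0 ≤ p k) (hp0 : p 0 = 0) (hsum : Summable p)
    (h1 : ∑' k, p k = 1)
    (hsumk : Summable fun k : ℕ => (k : ℝ) * p k) (hm : ∑' k : ℕ, (k : ℝ) * p k = m)
    (hsumka : Summable fun k : ℕ => (k : ℝ) ^ α * p k) :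
    birthDeathDrift α lam mu p X ≤ -(α * (mu - lam * (m - 1))) * X ^ α
      + lam * (α * (α - 1) * 2 ^ (α - 2) * ∑' k : ℕ, (k : ℝ) ^ α * p k)
        * X ^ (α - 1) := by
  have hX0 : 0 < X := by linarith
  have death : X ^ α - (X + 1) ^ α ≤ -(α * X ^ (α - 1)) := by
    have := rpow_tangent_line_le (β := α) (b := X + 1) (by linarith) hX0 (by linarith)
    linarith
  have birth := tsum_mul_rpow_add_sub_le hα hX hp hp0 hsum h1 hsumk hm hsumka
  have hXα : X * X ^ (α - 1) = X ^ α := by rw [rpow_sub_one hX0.ne']; field_simp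
  have hXα1 : X * X ^ (α - 2) = X ^ (α - 1) := by
    rw [show α - 1 = α - 2 + 1 by ring, rpow_add_one hX0.ne']; ring
  rw [birthDeathDrift]
  linear_combination (mu * X) * death + (lam * X) * birth + (α * (lam * (m - 1) - mu)) * hXα
    + (lam * (α * (α - 1) * 2 ^ (α - 2) * ∑' k : ℕ, (k : ℝ) ^ α * p k)) * hXα1

lemma mul_rpow_sub_one_le_mul_rpow_add {A E X β : ℝ} (hA : 0 < A) (hE : 0 ≤ E) (hβ : 1 ≤ β)
    (hX : 0 < X) :
    E * X ^ (β - 1) ≤ A * X ^ β + E * (E / A) ^ (β - 1) := by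
  rcases le_or_gt X (E / A) with hsmall | hlarge
  · have : E * X ^ (β - 1) ≤ E * (E / A) ^ (β - 1) := by gcongr
    linarith [mul_nonneg hA.le (rpow_nonneg hX.le β)]
  · have hEA : E ≤ A * X := by rw [div_lt_iff₀ hA] at hlarge; linarith
    calc E * X ^ (β - 1) ≤ A * X * X ^ (β - 1) := by gcongr
      _ = A * X ^ β := by rw [rpow_sub_one hX.ne']; field_simp
      _ ≤ A * X ^ β + E * (E / A) ^ (β - 1) := by
          linarith [mul_nonneg hE (rpow_nonneg (div_nonneg hE hA.le) (β - 1))]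

/-- Foster–Lyapunov drift condition: for `V(x) = (x+1)^α` with `α > 2` and the generator
`L` of a subcritical birth-and-death process with multiple births, there exist `c > 0`
and `K < ∞` such that `L V(x) ≤ -c V(x) + K` for all integers `x ≥ 1`. -/
theorem stmt18 (alpha lam mu m : ℝ) (halpha : 2 < alpha) (hlam : 0 < lam)
    (hmu : 0 < mu) (p : ℕ → ℝ) (hp : ∀ k, 0 ≤ p k) (hp0 : ∀ k, k < 2 → p k = 0)
    (hsum : Summable p) (h1 : ∑' k, p k = 1)
    (hsumk : Summable fun k : ℕ => (k : ℝ) * p k) (hm : ∑' k : ℕ, (k : ℝ) * p k = m)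
    (hsumka : Summable fun k : ℕ => (k : ℝ) ^ alpha * p k)
    (hsub : lam * (m - 1) < mu) :
    ∃ c > (0 : ℝ), ∃ K : ℝ, ∀ x : ℕ, 1 ≤ x →
      mu * (x : ℝ) * ((x : ℝ) ^ alpha - ((x : ℝ) + 1) ^ alpha)
        + lam * (x : ℝ) *
          (∑' k : ℕ, p k * (((x : ℝ) + (k : ℝ)) ^ alpha - ((x : ℝ) + 1) ^ alpha))
      ≤ -c * ((x : ℝ) + 1) ^ alpha + K := by
  set A := alpha * (mu - lam * (m - 1))
  set E := lam * (alpha * (alpha - 1) * 2 ^ (alpha - 2) * ∑' k : ℕ, (k : ℝ) ^ alpha * p k)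
  have hA : 0 < A := mul_pos (by linarith) (by linarith)
  have hE : 0 ≤ E := by
    have hS : 0 ≤ ∑' k : ℕ, (k : ℝ) ^ alpha * p k :=
      tsum_nonneg fun k => mul_nonneg (rpow_nonneg k.cast_nonneg alpha) (hp k)
    have : 0 ≤ alpha - 1 := by linarith
    positivity
  refine ⟨A / 2 / 2 ^ alpha, by positivity, E * (E / (A / 2)) ^ (alpha - 1), fun x hx => ?_⟩
  have hX : (1 : ℝ) ≤ x := by exact_mod_cast hx
  have hV : A / 2 / 2 ^ alpha * ((x : ℝ) + 1) ^ alpha ≤ A / 2 * (x : ℝ) ^ alpha := by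
    calc A / 2 / 2 ^ alpha * ((x : ℝ) + 1) ^ alpha
        ≤ A / 2 / 2 ^ alpha * (2 * (x : ℝ)) ^ alpha := by gcongr; linarith
      _ = A / 2 * (x : ℝ) ^ alpha := by rw [mul_rpow zero_le_two (by linarith)]; field_simp
  calc _ = birthDeathDrift alpha lam mu p x := rfl
    _ ≤ -A * (x : ℝ) ^ alpha + E * (x : ℝ) ^ (alpha - 1) :=
        birthDeathDrift_le halpha.le hlam.le hmu.le hX hp (hp0 0 two_pos) hsum h1 hsumk hm
          hsumka
    _ ≤ -A * (x : ℝ) ^ alpha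
          + (A / 2 * (x : ℝ) ^ alpha + E * (E / (A / 2)) ^ (alpha - 1)) := by
        gcongr
        exact mul_rpow_sub_one_le_mul_rpow_add (half_pos hA) hE (by linarith) (by linarith)
    _ ≤ _ := by linarith
end
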